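/- If A ⊆ ℤ^n is generic (for all A-neighbors a, a', a_i ≠ a'_i for all i), then Nb(A) is locally finite: every element of A has finitely many A-neighbors. -/

import Mathlib

/-- The coordinatewise supremum of `B ⊆ ℝ^n`, valued in `(ℝ ∪ {±∞})^n`. -/
noncomputable def vsup {n : ℕ} (B : Set (Fin n → ℝ)) : Fin n → EReal :=
  fun i => ⨆ b ∈ B, ((b i : ℝ) : EReal)

/-- `B` is a simplex of the neighbor complex of `A`. -/
def Nb {n : ℕ} (A B : Set (Fin n → ℝ)) : Prop :=
  B ⊆ A ∧ ¬ ∃ a ∈ A, ∀ i, ((a i : ℝ) : EReal) < vsup B i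

/-!
If `a` had infinitely many neighbors `b`, Dickson's lemma applied to the integer points `b ⊔ a`
would give two distinct neighbors `b ≠ c` with `b ≤ a ⊔ c`. Then `{a, b}` and `{b, c}` are faces
as well, since their joins lie below `a ⊔ c`, so genericity makes `b` differ from both `a` and `c`
in every coordinate. Hence `b < a ⊔ c` strictly in every coordinate, contradicting that `{a, c}`
is a face.
-/

open Set Function

theorem Set.PartiallyWellOrderedOn.of_image {α β : Type*} {r : β → β → Prop} {f : α → β}
    {s : Set α} (h : (f '' s).PartiallyWellOrderedOn r) : s.PartiallyWellOrderedOn (r on f) :=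
  fun g => h fun k => ⟨f (g k), mem_image_of_mem f (g k).2⟩

theorem isPWO_of_bddBelow_of_forall_int {ι : Type*} [Finite ι] {S : Set (ι → ℝ)}
    (hS : ∀ x ∈ S, ∀ i, ∃ m : ℤ, x i = m) (hb : BddBelow S) : S.IsPWO := by
  obtain ⟨c, hc⟩ := hb
  have hIci : (Ici fun i => ⌊c i⌋).IsPWO := by
    rw [← pi_univ_Ici]
    exact IsPWO.pi fun i => bddBelow_Ici.isWF.isPWO
  refine (hIci.image_of_monotone (f := fun z i => (z i : ℝ))
    fun z w h i => Int.cast_le.2 (h i)).mono ?_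
  intro x hx
  refine ⟨fun i => ⌊x i⌋, fun i => Int.floor_mono (hc hx i), funext fun i => ?_⟩
  obtain ⟨m, hm⟩ := hS x hx i
  simp [hm]

section NeighborComplex

variable {n : ℕ} {A : Set (Fin n → ℝ)} {a b b' c : Fin n → ℝ}

theorem vsup_pair (x y : Fin n → ℝ) (i : Fin n) : vsup {x, y} i = ((x ⊔ y) i : ℝ) := by
  simp only [vsup, iSup_pair, Pi.sup_apply, EReal.coe_strictMono.monotone.map_max]

theorem nb_pair_iff :
    Nb A {b, c} ↔ b ∈ A ∧ c ∈ A ∧ ∀ z ∈ A, ∃ i, (b ⊔ c) i ≤ z i := by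
  simp only [Nb, insert_subset_iff, singleton_subset_iff, vsup_pair, EReal.coe_lt_coe_iff,
    not_exists, not_and, not_forall, not_lt, and_assoc]

theorem Nb.pair_of_sup_le (h : Nb A {a, c}) (hb : b ∈ A) (hb' : b' ∈ A)
    (hle : b ⊔ b' ≤ a ⊔ c) : Nb A {b, b'} := by
  refine nb_pair_iff.2 ⟨hb, hb', fun z hz => ?_⟩
  obtain ⟨i, hi⟩ := (nb_pair_iff.1 h).2.2 z hz
  exact ⟨i, (hle i).trans hi⟩

def IsGeneric (A : Set (Fin n → ℝ)) : Prop :=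
  ∀ a ∈ A, ∀ a' ∈ A, a ≠ a' → Nb A {a, a'} → ∀ i, a i ≠ a' i

theorem IsGeneric.not_le_sup (hA : IsGeneric A) (hac : Nb A {a, c}) (hb : b ∈ A)
    (hba : b ≠ a) (hbc : b ≠ c) : ¬ b ≤ a ⊔ c := by
  intro hle
  obtain ⟨ha, hc, hface⟩ := nb_pair_iff.1 hac
  have hab : Nb A {a, b} := hac.pair_of_sup_le ha hb (sup_le le_sup_left hle)
  have hbc' : Nb A {b, c} := hac.pair_of_sup_le hb hc (sup_le hle le_sup_right)
  have hlt : ∀ i, b i < (a ⊔ c) i := by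
    intro i
    refine (hle i).lt_of_ne ?_
    rcases max_choice (a i) (c i) with h | h <;> rw [Pi.sup_apply, h]
    · exact (hA a ha b hb hba.symm hab i).symm
    · exact hA b hb c hc hbc hbc' i
  obtain ⟨i, hi⟩ := hface b hb
  exact (hlt i).not_ge hi

theorem IsGeneric.isAntichain_neighbors (hA : IsGeneric A) (a : Fin n → ℝ) :
    IsAntichain ((· ≤ ·) on (· ⊔ a)) ({b ∈ A | Nb A {a, b}} \ {a}) := by
  rintro b ⟨⟨hb, -⟩, hba⟩ c ⟨⟨-, hac⟩, -⟩ hbc (hle : b ⊔ a ≤ c ⊔ a)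
  exact hA.not_le_sup hac hb hba hbc ((le_sup_left.trans hle).trans_eq (sup_comm c a))

end NeighborComplex

theorem stmt_15 (n : ℕ) (A : Set (Fin n → ℝ))
    (hint : ∀ a ∈ A, ∀ i, ∃ m : ℤ, a i = (m : ℝ))
    (hgen : ∀ a ∈ A, ∀ a' ∈ A, a ≠ a' → Nb A {a, a'} → ∀ i, a i ≠ a' i) :
    ∀ a ∈ A, {b ∈ A | Nb A {a, b}}.Finite := by
  intro a ha
  have hsup_int : ∀ x ∈ (· ⊔ a) '' A, ∀ i, ∃ m : ℤ, x i = m := by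
    rintro _ ⟨b, hb, rfl⟩ i
    rcases max_choice (b i) (a i) with h | h <;> simp only [Pi.sup_apply, h]
    exacts [hint b hb i, hint a ha i]
  have hPWO : ((· ⊔ a) '' A).IsPWO :=
    isPWO_of_bddBelow_of_forall_int hsup_int ⟨a, by rintro _ ⟨b, -, rfl⟩; exact le_sup_right⟩
  refine Finite.of_sdiff ?_ (finite_singleton a)
  exact (IsGeneric.isAntichain_neighbors hgen a).finite_of_partiallyWellOrderedOn
    (hPWO.mono (image_mono fun b hb => hb.1.1)).of_image
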